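/- For every complex u with |u|²·W(x,x′) < 1 for all adjacent pairs x, x′, and every vertex x, the series Σ_{n≥0} u^{2n} B_{2n}x and Σ_{n≥0} u^{2n+1} B_{2n+1}x converge in ℓ²(VX) and satisfy: Σ_{n≥0} u^{2n} B_{2n}x = x + Σ_{x′∼x} ( u²W(x,x′) / (1 − u²W(x,x′)) ) x, and Σ_{n≥0} u^{2n+1} B_{2n+1}x = Σ_{x′∼x} ( u·w(x,x′) / (1 − u²W(x,x′)) ) x′. -/

import Mathlib

/- Formalization of a statement from "Ihara Zeta functions of infinite weighted graphs"
   (A. Deitmar).  Context: `X` is a connected graph of bounded valency, `w` is a positive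
   weight function on oriented edges (darts) with finite total weight. -/

open scoped BigOperators
open SimpleGraph

attribute [local instance 10] Classical.propDecidable
noncomputable local instance (priority := 10) {α : Type*} : DecidableEq α := Classical.decEq _

variable {V : Type*}

/-- The standard basis vector of `ℓ²(ι)` at `i`. -/
noncomputable def bv {ι : Type*} (i : ι) : lp (fun _ : ι => ℂ) 2 := lp.single 2 i 1

/-- For adjacent vertices `x, y`, `dartW G w h = w(x,y)·w(y,x)`, the weight `W(x,y)` of the
underlying edge. -/
noncomputable def dartW (G : SimpleGraph V) (w : G.Dart → ℝ) {x y : V} (h : G.Adj x y) : ℝ :=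
  w ⟨(x, y), h⟩ * w ⟨(y, x), h.symm⟩

/-- A path of length `m` in the graph `G`: a sequence of adjacent vertices
`x₀, x₁, …, x_m` (encoded as a function `ℕ → V` which is constant from index `m` on). -/
structure GPath (G : SimpleGraph V) (m : ℕ) where
  f : ℕ → V
  adj : ∀ i, i < m → G.Adj (f i) (f (i + 1))
  stable : ∀ i, m ≤ i → f i = f m

/-- The weight `w(p)` of a path: the product of the weights of its oriented edges. -/
noncomputable def GPath.wgt {G : SimpleGraph V} {m : ℕ} (w : G.Dart → ℝ) (p : GPath G m) : ℝ :=
  ∏ i : Fin m, w ⟨(p.f i, p.f (i + 1)), p.adj i i.isLt⟩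

/-- A path is reduced (has no backtracking) iff `x_{j-1} ≠ x_{j+1}` for all `j`. -/
def GPath.Reduced {G : SimpleGraph V} {m : ℕ} (p : GPath G m) : Prop :=
  ∀ i, i + 2 ≤ m → p.f i ≠ p.f (i + 2)

/-- The diagonal of an operator on `ℓ²(ι)` with respect to the standard orthonormal basis
is absolutely summable. -/
def DiagAbsSummable {ι : Type*}
    (S : lp (fun _ : ι => ℂ) 2 →L[ℂ] lp (fun _ : ι => ℂ) 2) : Prop :=
  Summable fun i : ι => ‖S (bv i) i‖

/-- The trace of an operator on `ℓ²(ι)`: the sum of its diagonal matrix entries with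
respect to the standard orthonormal basis. -/
noncomputable def diagTr {ι : Type*}
    (S : lp (fun _ : ι => ℂ) 2 →L[ℂ] lp (fun _ : ι => ℂ) 2) : ℂ :=
  ∑' i : ι, S (bv i) i

/-!
Every term of both series is a finite combination of basis vectors with coefficients
that are powers of the numbers `z(x′) = u² W(x, x′)`, all of modulus `< 1`: the even terms
are `(Σ_{x′∼x} z(x′)ⁿ) x` for `n ≥ 1`, the odd terms `Σ_{x′∼x} u w(x, x′) z(x′)ⁿ x′`.
Since `x` has finitely many neighbours, both series reduce to finitely many geometric series.
-/

section BasisVectors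

variable {ι : Type*}

lemma bv_apply (i j : ι) : bv i j = if j = i then 1 else 0 := by
  simp only [bv, lp.single_apply, Pi.single_apply]

lemma smul_bv_apply (c : ℂ) (i j : ι) : (c • bv i) j = if j = i then c else 0 := by
  rw [lp.coeFn_smul, Pi.smul_apply, bv_apply, smul_eq_mul, mul_ite, mul_one, mul_zero]

lemma sum_smul_bv_apply {s : Set ι} [Fintype s] (c : s → ℂ) (j : ι) :
    (∑ i : s, c i • bv (i : ι)) j = if h : j ∈ s then c ⟨j, h⟩ else 0 := by
  rw [lp.coeFn_sum, Finset.sum_apply]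
  simp_rw [smul_bv_apply]
  split_ifs with h
  · rw [Finset.sum_eq_single_of_mem ⟨j, h⟩ (Finset.mem_univ _)]
    · simp
    · intro i _ hij
      rw [if_neg fun hji => hij (Subtype.ext hji.symm)]
  · exact Finset.sum_eq_zero fun i _ => if_neg fun hji : j = i => h (hji ▸ i.2)

lemma eq_smul_bv_iff {v : lp (fun _ : ι => ℂ) 2} {c : ℂ} {i : ι} :
    v = c • bv i ↔ ∀ j, v j = if j = i then c else 0 := by
  refine ⟨fun h j => h ▸ smul_bv_apply c i j, fun h => lp.ext (funext fun j => ?_)⟩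
  rw [h, smul_bv_apply]

lemma eq_sum_smul_bv_iff {s : Set ι} [Fintype s] {v : lp (fun _ : ι => ℂ) 2} {c : s → ℂ} :
    v = ∑ i : s, c i • bv (i : ι) ↔ ∀ j, v j = if h : j ∈ s then c ⟨j, h⟩ else 0 := by
  refine ⟨fun h j => h ▸ sum_smul_bv_apply c j, fun h => lp.ext (funext fun j => ?_)⟩
  rw [h, sum_smul_bv_apply]

end BasisVectors

lemma hasSum_pow_succ_of_norm_lt_one {z : ℂ} (hz : ‖z‖ < 1) :
    HasSum (fun n : ℕ => z ^ (n + 1)) (z / (1 - z)) := by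
  simpa only [pow_succ', div_eq_mul_inv] using (hasSum_geometric_of_norm_lt_one hz).mul_left z

lemma dartW_pos {G : SimpleGraph V} {w : G.Dart → ℝ} (hw : ∀ e, 0 < w e) {x y : V}
    (h : G.Adj x y) : 0 < dartW G w h :=
  mul_pos (hw _) (hw _)

lemma norm_sq_mul_dartW {G : SimpleGraph V} {w : G.Dart → ℝ} (hw : ∀ e, 0 < w e) (u : ℂ)
    {x y : V} (h : G.Adj x y) : ‖u ^ 2 * (dartW G w h : ℂ)‖ = ‖u‖ ^ 2 * dartW G w h := by
  rw [norm_mul, norm_pow, Complex.norm_real, Real.norm_of_nonneg (dartW_pos hw h).le]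

section Series

variable {G : SimpleGraph V} {w : G.Dart → ℝ}
  {B : ℕ → (lp (fun _ : V => ℂ) 2 →L[ℂ] lp (fun _ : V => ℂ) 2)} {u : ℂ} {x : V}
  [Fintype (G.neighborSet x)]

lemma pow_smul_even_succ_eq_smul_bv (hBev : ∀ n, 1 ≤ n → ∀ y, B (2 * n) (bv x) y
      = if y = x then ((∑' x' : G.neighborSet x, dartW G w x'.2 ^ n : ℝ) : ℂ) else 0)
    (n : ℕ) : u ^ (2 * (n + 1)) • B (2 * (n + 1)) (bv x)
      = (∑ x' : G.neighborSet x, (u ^ 2 * (dartW G w x'.2 : ℂ)) ^ (n + 1)) • bv x := by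
  refine eq_smul_bv_iff.2 fun y => ?_
  rw [lp.coeFn_smul, Pi.smul_apply, hBev _ n.succ_pos, smul_eq_mul, mul_ite, mul_zero,
    tsum_fintype]
  push_cast
  simp_rw [Finset.mul_sum, mul_pow, ← pow_mul]

lemma pow_smul_odd_eq_sum_smul_bv (hBodd : ∀ n y, B (2 * n + 1) (bv x) y
      = if h : G.Adj x y then ((dartW G w h ^ n * w ⟨(x, y), h⟩ : ℝ) : ℂ) else 0)
    (n : ℕ) : u ^ (2 * n + 1) • B (2 * n + 1) (bv x)
      = ∑ x' : G.neighborSet x,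
          (u * w ⟨(x, x'), x'.2⟩ * (u ^ 2 * (dartW G w x'.2 : ℂ)) ^ n) • bv (x' : V) := by
  refine eq_sum_smul_bv_iff.2 fun y => ?_
  rw [lp.coeFn_smul, Pi.smul_apply, hBodd, smul_eq_mul]
  simp only [mem_neighborSet]
  split_ifs
  · push_cast
    rw [mul_pow, ← pow_mul]
    ring
  · exact mul_zero _

lemma hasSum_pow_smul_even (hB0 : B 0 = 1)
    (hBev : ∀ n, 1 ≤ n → ∀ y, B (2 * n) (bv x) y
      = if y = x then ((∑' x' : G.neighborSet x, dartW G w x'.2 ^ n : ℝ) : ℂ) else 0)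
    (hz : ∀ x' : G.neighborSet x, ‖u ^ 2 * (dartW G w x'.2 : ℂ)‖ < 1) :
    HasSum (fun n : ℕ => u ^ (2 * n) • B (2 * n) (bv x))
      (bv x + (∑ x' : G.neighborSet x, u ^ 2 * (dartW G w x'.2 : ℂ)
        / (1 - u ^ 2 * (dartW G w x'.2 : ℂ))) • bv x) := by
  have h := HasSum.zero_add (f := fun n : ℕ => u ^ (2 * n) • B (2 * n) (bv x)) <| by
    simp_rw [pow_smul_even_succ_eq_smul_bv hBev]
    exact (hasSum_sum fun x' _ => hasSum_pow_succ_of_norm_lt_one (hz x')).smul_const _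
  rwa [mul_zero, pow_zero, hB0, one_smul, one_apply_eq_self] at h

lemma hasSum_pow_smul_odd (hBodd : ∀ n y, B (2 * n + 1) (bv x) y
      = if h : G.Adj x y then ((dartW G w h ^ n * w ⟨(x, y), h⟩ : ℝ) : ℂ) else 0)
    (hz : ∀ x' : G.neighborSet x, ‖u ^ 2 * (dartW G w x'.2 : ℂ)‖ < 1) :
    HasSum (fun n : ℕ => u ^ (2 * n + 1) • B (2 * n + 1) (bv x))
      (∑ x' : G.neighborSet x,
        (u * w ⟨(x, x'), x'.2⟩ * (1 - u ^ 2 * (dartW G w x'.2 : ℂ))⁻¹) • bv (x' : V)) :=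
  (hasSum_sum fun x' _ => ((hasSum_geometric_of_norm_lt_one (hz x')).mul_left _).smul_const _
    ).congr_fun (pow_smul_odd_eq_sum_smul_bv hBodd)

end Series

theorem statement_6_general (G : SimpleGraph V)
    (M : ℝ)
    (hval : ∀ x : V, (G.neighborSet x).Finite ∧ ((G.neighborSet x).ncard : ℝ) ≤ M)
    (w : G.Dart → ℝ) (hw : ∀ e, 0 < w e)
    (B : ℕ → (lp (fun _ : V => ℂ) 2 →L[ℂ] lp (fun _ : V => ℂ) 2))
    (hB0 : B 0 = 1)
    (hBev : ∀ (n : ℕ), 1 ≤ n → ∀ x y : V, B (2 * n) (bv x) y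
      = if y = x then ((∑' x' : G.neighborSet x, dartW G w x'.2 ^ n : ℝ) : ℂ) else 0)
    (hBodd : ∀ (n : ℕ) (x y : V), B (2 * n + 1) (bv x) y
      = if h : G.Adj x y then ((dartW G w h ^ n * w ⟨(x, y), h⟩ : ℝ) : ℂ) else 0)
    (u : ℂ) (hu : ∀ ⦃x y : V⦄ (h : G.Adj x y), ‖u‖ ^ 2 * dartW G w h < 1) :
    ∀ x : V,
      (∃ v : lp (fun _ : V => ℂ) 2,
        HasSum (fun n : ℕ => u ^ (2 * n) • B (2 * n) (bv x)) v ∧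
        ∀ y : V, v y = if y = x then
            1 + ∑' x' : G.neighborSet x,
              u ^ 2 * (dartW G w x'.2 : ℂ) / (1 - u ^ 2 * (dartW G w x'.2 : ℂ))
          else 0) ∧
      (∃ v : lp (fun _ : V => ℂ) 2,
        HasSum (fun n : ℕ => u ^ (2 * n + 1) • B (2 * n + 1) (bv x)) v ∧
        ∀ y : V, v y = if h : G.Adj x y then
            u * (w ⟨(x, y), h⟩ : ℂ) / (1 - u ^ 2 * (dartW G w h : ℂ))
          else 0) := by
  intro x
  have : Fintype (G.neighborSet x) := (hval x).1.fintype
  have hz (x' : G.neighborSet x) := (norm_sq_mul_dartW hw u x'.2).trans_lt (hu x'.2)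
  refine ⟨⟨_, hasSum_pow_smul_even hB0 (fun n hn => hBev n hn x) hz, fun y => ?_⟩,
    ⟨_, hasSum_pow_smul_odd (hBodd · x) hz, fun y => ?_⟩⟩
  · rw [lp.coeFn_add, Pi.add_apply, bv_apply, smul_bv_apply, tsum_fintype]
    split_ifs <;> simp
  · rw [sum_smul_bv_apply]
    simp only [mem_neighborSet]
    split_ifs <;> simp [div_eq_mul_inv]

/-- For `u` with `|u|²W(x,x′) < 1` for all adjacent pairs, the even and odd
parts of `B(u)` applied to a basis vector converge and are given by the explicit formulas of
Lemma 2.3. -/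
theorem statement_6 (G : SimpleGraph V) (hconn : G.Connected)
    (M : ℝ) (hM : 0 < M)
    (hval : ∀ x : V, (G.neighborSet x).Finite ∧ ((G.neighborSet x).ncard : ℝ) ≤ M)
    (w : G.Dart → ℝ) (hw : ∀ e, 0 < w e) (hsum : Summable w)
    (B : ℕ → (lp (fun _ : V => ℂ) 2 →L[ℂ] lp (fun _ : V => ℂ) 2))
    (hB0 : B 0 = 1)
    (hBev : ∀ (n : ℕ), 1 ≤ n → ∀ x y : V, B (2 * n) (bv x) y
      = if y = x then ((∑' x' : G.neighborSet x, dartW G w x'.2 ^ n : ℝ) : ℂ) else 0)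
    (hBodd : ∀ (n : ℕ) (x y : V), B (2 * n + 1) (bv x) y
      = if h : G.Adj x y then ((dartW G w h ^ n * w ⟨(x, y), h⟩ : ℝ) : ℂ) else 0)
    (u : ℂ) (hu : ∀ ⦃x y : V⦄ (h : G.Adj x y), ‖u‖ ^ 2 * dartW G w h < 1) :
    ∀ x : V,
      (∃ v : lp (fun _ : V => ℂ) 2,
        HasSum (fun n : ℕ => u ^ (2 * n) • B (2 * n) (bv x)) v ∧
        ∀ y : V, v y = if y = x then
            1 + ∑' x' : G.neighborSet x,
              u ^ 2 * (dartW G w x'.2 : ℂ) / (1 - u ^ 2 * (dartW G w x'.2 : ℂ))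
          else 0) ∧
      (∃ v : lp (fun _ : V => ℂ) 2,
        HasSum (fun n : ℕ => u ^ (2 * n + 1) • B (2 * n + 1) (bv x)) v ∧
        ∀ y : V, v y = if h : G.Adj x y then
            u * (w ⟨(x, y), h⟩ : ℂ) / (1 - u ^ 2 * (dartW G w h : ℂ))
          else 0) :=
  statement_6_general G M hval w hw B hB0 hBev hBodd u hu
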